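/- Let φ : C → A be a bounded A-bimodule linear map admitting a quasi-basis. Then f(φ) admits a quasi-basis and there is an isomorphism ρ of A′ ∩ C onto B′ ∩ D such that θ^{f(φ)} = ρ ∘ θ^φ ∘ ρ^{-1}, where θ^φ and θ^{f(φ)} are the modular automorphisms of φ and f(φ). -/

import Mathlib

/-- A pair `(X, Y)` implementing a strong Morita equivalence of unital inclusions
`A ⊆ C` and `B ⊆ D` of unital C*-algebras: `Y` is a `C`–`D`-equivalence bimodule and
`X` is a closed subspace of `Y` which is an `A`–`B`-equivalence bimodule with the
restricted actions and inner products. -/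
structure MoritaPair
    (A : Type*) [NormedRing A] [StarRing A] [CStarRing A] [NormedAlgebra ℂ A]
      [CompleteSpace A] [StarModule ℂ A]
    (C : Type*) [NormedRing C] [StarRing C] [CStarRing C] [NormedAlgebra ℂ C]
      [CompleteSpace C] [StarModule ℂ C]
    (B : Type*) [NormedRing B] [StarRing B] [CStarRing B] [NormedAlgebra ℂ B]
      [CompleteSpace B] [StarModule ℂ B]
    (D : Type*) [NormedRing D] [StarRing D] [CStarRing D] [NormedAlgebra ℂ D]
      [CompleteSpace D] [StarModule ℂ D]
    (X : Type*) [NormedAddCommGroup X] [NormedSpace ℂ X]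
    (Y : Type*) [NormedAddCommGroup Y] [NormedSpace ℂ Y] [CompleteSpace Y] where
  /-- the unital isometric *-embedding of `A` into `C` -/
  ιA : A →⋆ₐ[ℂ] C
  /-- the unital isometric *-embedding of `B` into `D` -/
  ιB : B →⋆ₐ[ℂ] D
  ιA_isometry : Isometry ιA
  ιB_isometry : Isometry ιB
  /-- the inclusion of the closed subspace `X` into `Y` -/
  incl : X →ₗ[ℂ] Y
  incl_norm : ∀ x, ‖incl x‖ = ‖x‖
  incl_closed : IsClosed (Set.range incl)
  /-- left action of `C` on `Y` -/
  lC : C → Y → Y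
  lC_one : ∀ y, lC 1 y = y
  lC_mul : ∀ c c' y, lC (c * c') y = lC c (lC c' y)
  lC_add_right : ∀ c y y', lC c (y + y') = lC c y + lC c y'
  lC_add_left : ∀ c c' y, lC (c + c') y = lC c y + lC c' y
  lC_smul : ∀ (z : ℂ) c y, lC (z • c) y = z • lC c y
  /-- right action of `D` on `Y` -/
  rD : Y → D → Y
  rD_one : ∀ y, rD y 1 = y
  rD_mul : ∀ y d d', rD y (d * d') = rD (rD y d) d'
  rD_add_left : ∀ y y' d, rD (y + y') d = rD y d + rD y' d
  rD_add_right : ∀ y d d', rD y (d + d') = rD y d + rD y d'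
  rD_smul : ∀ (z : ℂ) y d, rD y (z • d) = z • rD y d
  smul_assoc : ∀ c y d, rD (lC c y) d = lC c (rD y d)
  /-- the left `C`-valued inner product on `Y` -/
  innC : Y → Y → C
  innC_add_left : ∀ y y' z, innC (y + y') z = innC y z + innC y' z
  innC_star : ∀ y z, star (innC y z) = innC z y
  innC_lC : ∀ c y z, innC (lC c y) z = c * innC y z
  innC_norm : ∀ y, ‖innC y y‖ = ‖y‖ ^ 2
  /-- the right `D`-valued inner product on `Y` -/
  innD : Y → Y → D
  innD_add_right : ∀ y z z', innD y (z + z') = innD y z + innD y z'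
  innD_star : ∀ y z, star (innD y z) = innD z y
  innD_rD : ∀ y z d, innD y (rD z d) = innD y z * d
  innD_norm : ∀ y, ‖innD y y‖ = ‖y‖ ^ 2
  imprimitivity : ∀ y z w, lC (innC y z) w = rD y (innD z w)
  innC_full : (Submodule.span ℂ {c : C | ∃ y z, innC y z = c}).topologicalClosure = ⊤
  innD_full : (Submodule.span ℂ {d : D | ∃ y z, innD y z = d}).topologicalClosure = ⊤
  /-- left action of `A` on `X`, the restriction of the `C`-action -/
  lA : A → X → X
  lA_compat : ∀ a x, incl (lA a x) = lC (ιA a) (incl x)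
  /-- right action of `B` on `X`, the restriction of the `D`-action -/
  rB : X → B → X
  rB_compat : ∀ x b, incl (rB x b) = rD (incl x) (ιB b)
  /-- the left `A`-valued inner product on `X`, the restriction of `innC` -/
  innA : X → X → A
  innA_compat : ∀ x z, ιA (innA x z) = innC (incl x) (incl z)
  /-- the right `B`-valued inner product on `X`, the restriction of `innD` -/
  innB : X → X → B
  innB_compat : ∀ x z, ιB (innB x z) = innD (incl x) (incl z)
  innA_full : (Submodule.span ℂ {a : A | ∃ x z, innA x z = a}).topologicalClosure = ⊤
  innB_full : (Submodule.span ℂ {b : B | ∃ x z, innB x z = b}).topologicalClosure = ⊤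

variable {A : Type*} [NormedRing A] [StarRing A] [CStarRing A] [NormedAlgebra ℂ A]
  [CompleteSpace A] [StarModule ℂ A]
variable {C : Type*} [NormedRing C] [StarRing C] [CStarRing C] [NormedAlgebra ℂ C]
  [CompleteSpace C] [StarModule ℂ C]
variable {B : Type*} [NormedRing B] [StarRing B] [CStarRing B] [NormedAlgebra ℂ B]
  [CompleteSpace B] [StarModule ℂ B]
variable {D : Type*} [NormedRing D] [StarRing D] [CStarRing D] [NormedAlgebra ℂ D]
  [CompleteSpace D] [StarModule ℂ D]
variable {X : Type*} [NormedAddCommGroup X] [NormedSpace ℂ X]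
variable {Y : Type*} [NormedAddCommGroup Y] [NormedSpace ℂ Y] [CompleteSpace Y]

/-!
Fullness of the inner products and openness of the units give finite families with
`∑ ⟨x i, z i⟩_B = 1` and `∑ ⟨p l, q l⟩_A = 1`. For `c` in `A′ ∩ C`, `ρ c = ∑ ⟨x i, c • z i⟩_D`
is the element of `D` acting on the right of `X` as `c` acts on the left; this characterization
makes `ρ` a *-isomorphism `A′ ∩ C ≃ B′ ∩ D` with inverse `d ↦ ∑ ⟨p l • d, q l⟩_C`.
Since `ψ ⟨w, c • w'⟩_D = ⟨w, φ c • w'⟩_B` for `w, w'` in `X`, the elements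
`⟨x i, u j • p l⟩_D`, `⟨q l, v j • z i⟩_D` form a quasi-basis for `ψ`. Finally
`ψ (ρ c * y) = ψ (y * ρ (θφ c))`, and a quasi-basis makes `ψ (y * ·)` separate points, so
`θψ (ρ c) = ρ (θφ c)`.
-/

def IsQuasiBasis {R S : Type*} [Semiring R] (ι : S → R) (E : R → S)
    {κ : Type*} [Fintype κ] (u v : κ → R) : Prop :=
  ∀ r, r = ∑ k, u k * ι (E (v k * r)) ∧ r = ∑ k, ι (E (r * u k)) * v k

namespace IsQuasiBasis

variable {R S : Type*} [Semiring R] {ι : S → R} {E : R → S}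
  {κ : Type*} [Fintype κ] {u v : κ → R}

lemma exists_fin (h : IsQuasiBasis ι E u v) :
    ∃ (m : ℕ) (u' v' : Fin m → R), IsQuasiBasis ι E u' v' := by
  let e := Fintype.equivFin κ
  refine ⟨Fintype.card κ, u ∘ e.symm, v ∘ e.symm, fun r => ?_⟩
  simp only [Function.comp_apply, e.symm.sum_comp (fun k => u k * ι (E (v k * r))),
    e.symm.sum_comp (fun k => ι (E (r * u k)) * v k)]
  exact h r

lemma eq_of_map_mul_eq (h : IsQuasiBasis ι E u v) {r r' : R}
    (hr : ∀ y, E (y * r) = E (y * r')) : r = r' := by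
  rw [(h r).1, (h r').1]
  simp only [hr]

end IsQuasiBasis

lemma exists_isUnit_mem_of_dense {R : Type*} [NormedRing R] [HasSummableGeomSeries R]
    {s : Set R} (hs : Dense s) : ∃ r ∈ s, IsUnit r :=
  hs.exists_mem_open Units.isOpen ⟨1, isUnit_one⟩

namespace MoritaPair

variable (M : MoritaPair A C B D X Y)

lemma incl_injective : Function.Injective M.incl := fun x x' h => by
  rw [← sub_eq_zero, ← norm_eq_zero, ← M.incl_norm, map_sub, h, sub_self, norm_zero]

lemma lC_sum {ι : Type*} (c : C) (s : Finset ι) (f : ι → Y) :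
    M.lC c (∑ i ∈ s, f i) = ∑ i ∈ s, M.lC c (f i) :=
  map_sum (AddMonoidHom.mk' (M.lC c) (M.lC_add_right c)) f s

lemma sum_lC {ι : Type*} (s : Finset ι) (f : ι → C) (y : Y) :
    M.lC (∑ i ∈ s, f i) y = ∑ i ∈ s, M.lC (f i) y :=
  map_sum (AddMonoidHom.mk' (M.lC · y) (M.lC_add_left · · y)) f s

lemma rD_sum {ι : Type*} (y : Y) (s : Finset ι) (f : ι → D) :
    M.rD y (∑ i ∈ s, f i) = ∑ i ∈ s, M.rD y (f i) :=
  map_sum (AddMonoidHom.mk' (M.rD y) (M.rD_add_right y)) f s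

lemma sum_rD {ι : Type*} (s : Finset ι) (f : ι → Y) (d : D) :
    M.rD (∑ i ∈ s, f i) d = ∑ i ∈ s, M.rD (f i) d :=
  map_sum (AddMonoidHom.mk' (M.rD · d) (M.rD_add_left · · d)) f s

lemma innD_add_left (y y' z : Y) : M.innD (y + y') z = M.innD y z + M.innD y' z := by
  rw [← M.innD_star, M.innD_add_right, star_add, M.innD_star, M.innD_star]

lemma innD_sum {ι : Type*} (y : Y) (s : Finset ι) (f : ι → Y) :
    M.innD y (∑ i ∈ s, f i) = ∑ i ∈ s, M.innD y (f i) :=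
  map_sum (AddMonoidHom.mk' (M.innD y) (M.innD_add_right y)) f s

lemma sum_innD {ι : Type*} (s : Finset ι) (f : ι → Y) (z : Y) :
    M.innD (∑ i ∈ s, f i) z = ∑ i ∈ s, M.innD (f i) z :=
  map_sum (AddMonoidHom.mk' (M.innD · z) (M.innD_add_left · · z)) f s

lemma innC_lC_right (y : Y) (c : C) (z : Y) : M.innC y (M.lC c z) = M.innC y z * star c := by
  rw [← M.innC_star, M.innC_lC, star_mul, M.innC_star]

lemma innD_rD_left (y : Y) (d : D) (z : Y) : M.innD (M.rD y d) z = star d * M.innD y z := by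
  rw [← M.innD_star, M.innD_rD, star_mul, M.innD_star]

lemma mul_innD (d : D) (y w : Y) : d * M.innD y w = M.innD (M.rD y (star d)) w := by
  rw [M.innD_rD_left, star_star]

lemma innA_lA (a : A) (x z : X) : M.innA (M.lA a x) z = a * M.innA x z :=
  M.ιA_isometry.injective <| by rw [map_mul, M.innA_compat, M.innA_compat, M.lA_compat, M.innC_lC]

lemma innB_rB (x z : X) (b : B) : M.innB x (M.rB z b) = M.innB x z * b :=
  M.ιB_isometry.injective <| by rw [map_mul, M.innB_compat, M.innB_compat, M.rB_compat, M.innD_rD]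

lemma rB_innB (x w e : X) : M.rB x (M.innB w e) = M.lA (M.innA x w) e :=
  M.incl_injective <| by
    rw [M.rB_compat, M.innB_compat, ← M.imprimitivity, ← M.innA_compat, ← M.lA_compat]

lemma exists_sum_innB_eq_one : ∃ (n : ℕ) (x z : Fin n → X), ∑ i, M.innB (x i) (z i) = 1 := by
  obtain ⟨r, hr, U, rfl⟩ := exists_isUnit_mem_of_dense
    (Submodule.dense_iff_topologicalClosure_eq_top.mpr M.innB_full)
  obtain ⟨k, f, g, hg⟩ := Submodule.mem_span_set'.mp hr
  choose x z hxz using fun i => (g i).2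
  refine ⟨k, x, fun i => M.rB (z i) (f i • ↑U⁻¹), ?_⟩
  simp only [M.innB_rB, mul_smul_comm, ← smul_mul_assoc, hxz]
  rw [← Finset.sum_mul, hg, U.mul_inv]

lemma exists_sum_innA_eq_one : ∃ (n : ℕ) (p q : Fin n → X), ∑ l, M.innA (p l) (q l) = 1 := by
  obtain ⟨r, hr, U, rfl⟩ := exists_isUnit_mem_of_dense
    (Submodule.dense_iff_topologicalClosure_eq_top.mpr M.innA_full)
  obtain ⟨k, f, g, hg⟩ := Submodule.mem_span_set'.mp hr
  choose p q hpq using fun i => (g i).2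
  refine ⟨k, fun i => M.lA (f i • ↑U⁻¹) (p i), q, ?_⟩
  simp only [M.innA_lA, smul_mul_assoc, ← mul_smul_comm, hpq]
  rw [← Finset.mul_sum, hg, U.inv_mul]

section UnitFamilies

variable {n nA : ℕ} {x z : Fin n → X} {p q : Fin nA → X}

lemma sum_innB_swap (hB : ∑ i, M.innB (x i) (z i) = 1) : ∑ i, M.innB (z i) (x i) = 1 := by
  refine M.ιB_isometry.injective ?_
  have h := congrArg (star ∘ M.ιB) hB
  simp only [Function.comp_apply, map_sum, star_sum, M.innB_compat, M.innD_star] at h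
  simpa only [map_sum, M.innB_compat, map_one, star_one] using h

lemma sum_innD_incl (hB : ∑ i, M.innB (x i) (z i) = 1) :
    ∑ i, M.innD (M.incl (x i)) (M.incl (z i)) = 1 := by
  simpa only [map_sum, M.innB_compat, map_one] using congrArg M.ιB hB

lemma sum_innC_incl (hA : ∑ l, M.innA (p l) (q l) = 1) :
    ∑ l, M.innC (M.incl (p l)) (M.incl (q l)) = 1 := by
  simpa only [map_sum, M.innA_compat, map_one] using congrArg M.ιA hA

lemma sum_lC_innC (hB : ∑ i, M.innB (x i) (z i) = 1) (y : Y) :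
    ∑ i, M.lC (M.innC y (M.incl (x i))) (M.incl (z i)) = y := by
  simp only [M.imprimitivity]
  rw [← M.rD_sum, M.sum_innD_incl hB, M.rD_one]

lemma sum_rD_innD (hA : ∑ l, M.innA (p l) (q l) = 1) (y : Y) :
    ∑ l, M.rD (M.incl (p l)) (M.innD (M.incl (q l)) y) = y := by
  simp only [← M.imprimitivity]
  rw [← M.sum_lC, M.sum_innC_incl hA, M.lC_one]

lemma sum_innD_mul_innD (hA : ∑ l, M.innA (p l) (q l) = 1) (y y' : Y) :
    ∑ l, M.innD y (M.incl (p l)) * M.innD (M.incl (q l)) y' = M.innD y y' := by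
  simp only [← M.innD_rD]
  rw [← M.innD_sum, M.sum_rD_innD hA]

lemma eq_of_forall_rD_eq (hB : ∑ i, M.innB (x i) (z i) = 1) {e e' : D}
    (h : ∀ w : X, M.rD (M.incl w) e = M.rD (M.incl w) e') : e = e' := by
  have expand : ∀ e : D, e = ∑ i, M.innD (M.incl (x i)) (M.rD (M.incl (z i)) e) := fun e => by
    simp only [M.innD_rD]
    rw [← Finset.sum_mul, M.sum_innD_incl hB, one_mul]
  rw [expand e, expand e']
  simp only [h]

lemma eq_of_forall_lC_eq (hA : ∑ l, M.innA (p l) (q l) = 1) {c c' : C}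
    (h : ∀ w : X, M.lC c (M.incl w) = M.lC c' (M.incl w)) : c = c' := by
  have expand : ∀ c : C, c = ∑ l, M.innC (M.lC c (M.incl (p l))) (M.incl (q l)) := fun c => by
    simp only [M.innC_lC]
    rw [← Finset.mul_sum, M.sum_innC_incl hA, mul_one]
  rw [expand c, expand c']
  simp only [h]

lemma innD_lC (hB : ∑ i, M.innB (x i) (z i) = 1) (c : C) (y w : Y) :
    M.innD (M.lC c y) w = M.innD y (M.lC (star c) w) :=
  M.eq_of_forall_rD_eq hB fun _ => by
    rw [← M.imprimitivity, ← M.imprimitivity, M.innC_lC_right, M.lC_mul]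

lemma innD_lC_right (hB : ∑ i, M.innB (x i) (z i) = 1) (y : Y) (c : C) (w : Y) :
    M.innD y (M.lC c w) = M.innD (M.lC (star c) y) w := by
  rw [M.innD_lC hB, star_star]

lemma innC_rD (hA : ∑ l, M.innA (p l) (q l) = 1) (y : Y) (d : D) (w : Y) :
    M.innC (M.rD y d) w = M.innC y (M.rD w (star d)) :=
  M.eq_of_forall_lC_eq hA fun _ => by
    rw [M.imprimitivity, M.imprimitivity, M.innD_rD_left, M.rD_mul, star_star]

lemma eq_of_forall_innA_rB_eq (hB : ∑ i, M.innB (x i) (z i) = 1) {b b' : B}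
    (h : ∀ w w' : X, M.innA (M.rB w b) w' = M.innA (M.rB w b') w') : b = b' :=
  M.ιB_isometry.injective <| M.eq_of_forall_rD_eq hB fun w => by
    rw [← M.sum_lC_innC hB (M.rD _ (M.ιB b)), ← M.sum_lC_innC hB (M.rD _ (M.ιB b'))]
    simp only [← M.rB_compat, ← M.innA_compat, h]

end UnitFamilies

def rho {n : ℕ} (x z : Fin n → X) (c : C) : D :=
  ∑ i, M.innD (M.incl (x i)) (M.lC c (M.incl (z i)))

def rhoInv {n : ℕ} (p q : Fin n → X) (d : D) : C :=
  ∑ l, M.innC (M.rD (M.incl (p l)) d) (M.incl (q l))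

section RelativeCommutants

variable {n nA : ℕ} {x z : Fin n → X} {p q : Fin nA → X}

lemma star_mem_commutant {c : C} (hc : ∀ a : A, M.ιA a * c = c * M.ιA a) (a : A) :
    M.ιA a * star c = star c * M.ιA a := by
  simpa only [star_mul, ← map_star, star_star] using (congrArg star (hc (star a))).symm

lemma mul_mem_commutant {c c' : C} (hc : ∀ a : A, M.ιA a * c = c * M.ιA a)
    (hc' : ∀ a : A, M.ιA a * c' = c' * M.ιA a) (a : A) :
    M.ιA a * (c * c') = c * c' * M.ιA a := by
  rw [← mul_assoc, hc, mul_assoc, hc', mul_assoc]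

lemma rD_rho (hB : ∑ i, M.innB (x i) (z i) = 1) {c : C}
    (hc : ∀ a : A, M.ιA a * c = c * M.ιA a) (w : X) :
    M.rD (M.incl w) (M.rho x z c) = M.lC c (M.incl w) := by
  have hcomm : ∀ i, M.innC (M.incl w) (M.incl (x i)) * c
      = c * M.innC (M.incl w) (M.incl (x i)) := fun i => by
    rw [← M.innA_compat, hc]
  simp only [rho, M.rD_sum, ← M.imprimitivity]
  conv_rhs => rw [← M.sum_lC_innC hB (M.incl w), M.lC_sum]
  refine Finset.sum_congr rfl fun i _ => ?_
  rw [← M.lC_mul, ← M.lC_mul, hcomm]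

lemma lC_rhoInv (hA : ∑ l, M.innA (p l) (q l) = 1) {d : D}
    (hd : ∀ b : B, M.ιB b * d = d * M.ιB b) (w : X) :
    M.lC (M.rhoInv p q d) (M.incl w) = M.rD (M.incl w) d := by
  have hcomm : ∀ l, d * M.innD (M.incl (q l)) (M.incl w)
      = M.innD (M.incl (q l)) (M.incl w) * d := fun l => by
    rw [← M.innB_compat, hd]
  simp only [rhoInv, M.sum_lC, M.imprimitivity]
  conv_rhs => rw [← M.sum_rD_innD hA (M.incl w), M.sum_rD]
  refine Finset.sum_congr rfl fun l _ => ?_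
  rw [← M.rD_mul, ← M.rD_mul, hcomm]

lemma rho_mem_commutant (hB : ∑ i, M.innB (x i) (z i) = 1) {c : C}
    (hc : ∀ a : A, M.ιA a * c = c * M.ιA a) (b : B) :
    M.ιB b * M.rho x z c = M.rho x z c * M.ιB b :=
  M.eq_of_forall_rD_eq hB fun w => by
    rw [M.rD_mul, ← M.rB_compat, M.rD_rho hB hc, M.rB_compat, M.rD_mul, M.rD_rho hB hc,
      M.smul_assoc]

lemma rhoInv_mem_commutant (hA : ∑ l, M.innA (p l) (q l) = 1) {d : D}
    (hd : ∀ b : B, M.ιB b * d = d * M.ιB b) (a : A) :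
    M.ιA a * M.rhoInv p q d = M.rhoInv p q d * M.ιA a :=
  M.eq_of_forall_lC_eq hA fun w => by
    rw [M.lC_mul, M.lC_rhoInv hA hd, M.lC_mul, ← M.lA_compat, M.lC_rhoInv hA hd, M.lA_compat,
      M.smul_assoc]

lemma rho_rhoInv (hB : ∑ i, M.innB (x i) (z i) = 1) (hA : ∑ l, M.innA (p l) (q l) = 1) {d : D}
    (hd : ∀ b : B, M.ιB b * d = d * M.ιB b) :
    M.rho x z (M.rhoInv p q d) = d :=
  M.eq_of_forall_rD_eq hB fun w => by
    rw [M.rD_rho hB (M.rhoInv_mem_commutant hA hd), M.lC_rhoInv hA hd]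

lemma rho_injOn (hB : ∑ i, M.innB (x i) (z i) = 1) (hA : ∑ l, M.innA (p l) (q l) = 1)
    {c c' : C} (hc : ∀ a : A, M.ιA a * c = c * M.ιA a)
    (hc' : ∀ a : A, M.ιA a * c' = c' * M.ιA a) (h : M.rho x z c = M.rho x z c') : c = c' :=
  M.eq_of_forall_lC_eq hA fun w => by rw [← M.rD_rho hB hc, h, M.rD_rho hB hc']

lemma rho_add (c c' : C) : M.rho x z (c + c') = M.rho x z c + M.rho x z c' := by
  simp only [rho, M.lC_add_left, M.innD_add_right, Finset.sum_add_distrib]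

lemma rho_mul (hB : ∑ i, M.innB (x i) (z i) = 1) {c c' : C}
    (hc : ∀ a : A, M.ιA a * c = c * M.ιA a) (hc' : ∀ a : A, M.ιA a * c' = c' * M.ιA a) :
    M.rho x z (c * c') = M.rho x z c * M.rho x z c' :=
  M.eq_of_forall_rD_eq hB fun w => by
    rw [M.rD_rho hB (M.mul_mem_commutant hc hc'), M.rD_mul, M.rD_rho hB hc, M.smul_assoc,
      M.rD_rho hB hc', M.lC_mul]

/-- The adjoint of `rho` built from `(x, z)` is `rho` built from `(z, x)`, and on the relative
commutant `rho` does not depend on the family. -/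
lemma rho_star (hB : ∑ i, M.innB (x i) (z i) = 1) {c : C}
    (hc : ∀ a : A, M.ιA a * c = c * M.ιA a) :
    M.rho x z (star c) = star (M.rho x z c) := by
  have hswap : star (M.rho x z c) = M.rho z x (star c) := by
    simp only [rho, star_sum, M.innD_star, M.innD_lC hB]
  rw [hswap]
  refine M.eq_of_forall_rD_eq hB fun w => ?_
  rw [M.rD_rho hB (M.star_mem_commutant hc), M.rD_rho (M.sum_innB_swap hB)
    (M.star_mem_commutant hc)]

end RelativeCommutants

/-- `ψ = f(φ)`. -/
def IsInducedMap (φ : C → A) (ψ : D → B) : Prop :=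
  ∀ (d : D) (x z : X), M.innA (M.rB x (ψ d)) z = φ (M.innC (M.rD (M.incl x) d) (M.incl z))

def expectRight (φ : C → A) {n : ℕ} (x z : Fin n → X) (y : Y) : Y :=
  ∑ i, M.lC (M.ιA (φ (M.innC y (M.incl (x i))))) (M.incl (z i))

def expectLeft (φ : C → A) {n : ℕ} (x z : Fin n → X) (y : Y) : Y :=
  ∑ i, M.lC (star (M.ιA (φ (M.innC (M.incl (z i)) y)))) (M.incl (x i))

section InducedMap

variable {n nA m : ℕ} {x z : Fin n → X} {p q : Fin nA → X} {u v : Fin m → C}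
variable {φ : C → A}

lemma ιB_map_innD_lC {ψ : D → B} (hB : ∑ i, M.innB (x i) (z i) = 1)
    (hφ : ∀ (a : A) (c : C), φ (M.ιA a * c) = a * φ c ∧ φ (c * M.ιA a) = φ c * a)
    (hψ : M.IsInducedMap φ ψ) (w w' : X) (c : C) :
    M.ιB (ψ (M.innD (M.incl w) (M.lC c (M.incl w'))))
      = M.innD (M.incl w) (M.lC (M.ιA (φ c)) (M.incl w')) := by
  rw [← M.lA_compat, ← M.innB_compat]
  refine congrArg M.ιB (M.eq_of_forall_innA_rB_eq hB fun w₁ w₂ => ?_)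
  rw [hψ, M.rB_innB, M.innA_lA, M.innA_lA, ← M.imprimitivity, M.innC_lC, M.innC_lC,
    ← M.innA_compat, ← M.innA_compat, (hφ _ _).1, (hφ _ _).2]

lemma map_rho_mul {ψ : D → B} (hB : ∑ i, M.innB (x i) (z i) = 1) (hA : ∑ l, M.innA (p l) (q l) = 1)
    (hψ : M.IsInducedMap φ ψ) {c c' : C} (hc : ∀ a : A, M.ιA a * c = c * M.ιA a)
    (hc' : ∀ a : A, M.ιA a * c' = c' * M.ιA a) (hmod : ∀ y : C, φ (c * y) = φ (y * c'))
    (y : D) : ψ (M.rho x z c * y) = ψ (y * M.rho x z c') :=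
  M.eq_of_forall_innA_rB_eq hB fun w w' => by
    rw [hψ, hψ, M.rD_mul, M.rD_rho hB hc, M.smul_assoc, M.innC_lC, hmod, M.rD_mul,
      M.innC_rD hA (M.rD _ y), ← M.rho_star hB hc', M.rD_rho hB (M.star_mem_commutant hc'),
      M.innC_lC_right, star_star]

variable {G : Type*} [FunLike G D B] [AddMonoidHomClass G D B] {ψ : G}

lemma ιB_map_innD_incl_left (hB : ∑ i, M.innB (x i) (z i) = 1)
    (hφ : ∀ (a : A) (c : C), φ (M.ιA a * c) = a * φ c ∧ φ (c * M.ιA a) = φ c * a)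
    (hψ : M.IsInducedMap φ ψ) (w : X) (y : Y) :
    M.ιB (ψ (M.innD (M.incl w) y)) = M.innD (M.incl w) (M.expectRight φ x z y) := by
  conv_lhs => rw [← M.sum_lC_innC hB y]
  simp only [M.innD_sum, map_sum, M.ιB_map_innD_lC hB hφ hψ, expectRight]

lemma ιB_map_innD_incl_right (hB : ∑ i, M.innB (x i) (z i) = 1)
    (hφ : ∀ (a : A) (c : C), φ (M.ιA a * c) = a * φ c ∧ φ (c * M.ιA a) = φ c * a)
    (hψ : M.IsInducedMap φ ψ) (y : Y) (w : X) :
    M.ιB (ψ (M.innD y (M.incl w))) = M.innD (M.expectLeft φ x z y) (M.incl w) := by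
  conv_lhs => rw [← M.sum_lC_innC (M.sum_innB_swap hB) y]
  simp only [M.sum_innD, map_sum, M.innD_lC hB, M.innC_star, M.ιB_map_innD_lC hB hφ hψ]
  simp only [expectLeft, M.sum_innD, M.innD_lC hB, star_star]

lemma sum_lC_expectRight (hB : ∑ i, M.innB (x i) (z i) = 1) (hqb : IsQuasiBasis M.ιA φ u v)
    (y : Y) : ∑ j, M.lC (u j) (M.expectRight φ x z (M.lC (v j) y)) = y := by
  simp only [expectRight, M.lC_sum, M.innC_lC, ← M.lC_mul]
  rw [Finset.sum_comm]
  simp only [← M.sum_lC, ← (hqb _).1]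
  exact M.sum_lC_innC hB y

lemma sum_lC_expectLeft (hB : ∑ i, M.innB (x i) (z i) = 1) (hqb : IsQuasiBasis M.ιA φ u v)
    (y : Y) : ∑ j, M.lC (star (v j)) (M.expectLeft φ x z (M.lC (star (u j)) y)) = y := by
  simp only [expectLeft, M.lC_sum, M.innC_lC_right, star_star, ← M.lC_mul, ← star_mul]
  rw [Finset.sum_comm]
  simp only [← M.sum_lC, ← star_sum, ← (hqb _).2, M.innC_star]
  exact M.sum_lC_innC (M.sum_innB_swap hB) y

end InducedMap

section InducedQuasiBasis

variable {n nA m : ℕ} {x z : Fin n → X} {p q : Fin nA → X} {u v : Fin m → C}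
variable {φ : C → A} {G : Type*} [FunLike G D B] [AddMonoidHomClass G D B] {ψ : G}

lemma sum_sum_innD_mul_ιB_map (hB : ∑ i, M.innB (x i) (z i) = 1)
    (hA : ∑ l, M.innA (p l) (q l) = 1)
    (hφ : ∀ (a : A) (c : C), φ (M.ιA a * c) = a * φ c ∧ φ (c * M.ιA a) = φ c * a)
    (hψ : M.IsInducedMap φ ψ) (hqb : IsQuasiBasis M.ιA φ u v) (y y' : Y) :
    ∑ j, ∑ l, M.innD y (M.lC (u j) (M.incl (p l)))
      * M.ιB (ψ (M.innD (M.incl (q l)) (M.lC (v j) y'))) = M.innD y y' := by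
  simp only [M.innD_lC_right hB y, M.ιB_map_innD_incl_left (z := z) hB hφ hψ,
    M.sum_innD_mul_innD hA]
  simp only [M.innD_lC hB, star_star]
  rw [← M.innD_sum, M.sum_lC_expectRight hB hqb]

lemma sum_sum_ιB_map_mul_innD (hB : ∑ i, M.innB (x i) (z i) = 1)
    (hA : ∑ l, M.innA (p l) (q l) = 1)
    (hφ : ∀ (a : A) (c : C), φ (M.ιA a * c) = a * φ c ∧ φ (c * M.ιA a) = φ c * a)
    (hψ : M.IsInducedMap φ ψ) (hqb : IsQuasiBasis M.ιA φ u v) (y y' : Y) :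
    ∑ j, ∑ l, M.ιB (ψ (M.innD y (M.lC (u j) (M.incl (p l)))))
      * M.innD (M.incl (q l)) (M.lC (v j) y') = M.innD y y' := by
  simp only [M.innD_lC_right hB y, M.ιB_map_innD_incl_right (z := z) hB hφ hψ,
    M.sum_innD_mul_innD hA]
  simp only [M.innD_lC_right hB _ (v _)]
  rw [← M.sum_innD, M.sum_lC_expectLeft hB hqb]

theorem isQuasiBasis_induced (hB : ∑ i, M.innB (x i) (z i) = 1)
    (hA : ∑ l, M.innA (p l) (q l) = 1)
    (hφ : ∀ (a : A) (c : C), φ (M.ιA a * c) = a * φ c ∧ φ (c * M.ιA a) = φ c * a)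
    (hψ : M.IsInducedMap φ ψ) (hqb : IsQuasiBasis M.ιA φ u v) :
    IsQuasiBasis M.ιB ψ
      (fun k : Fin n × Fin m × Fin nA =>
        M.innD (M.incl (x k.1)) (M.lC (u k.2.1) (M.incl (p k.2.2))))
      (fun k => M.innD (M.incl (q k.2.2)) (M.lC (v k.2.1) (M.incl (z k.1)))) := fun d => by
  simp only [Fintype.sum_prod_type]
  constructor
  · simp only [← M.innD_rD (M.incl (q _)), M.smul_assoc,
      M.sum_sum_innD_mul_ιB_map hB hA hφ hψ hqb, M.innD_rD]
    rw [← Finset.sum_mul, M.sum_innD_incl hB, one_mul]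
  · simp only [M.mul_innD d (M.incl _), M.sum_sum_ιB_map_mul_innD hB hA hφ hψ hqb]
    simp only [← M.mul_innD]
    rw [← Finset.mul_sum, M.sum_innD_incl hB, mul_one]

end InducedQuasiBasis

end MoritaPair

/-- if `φ : C → A` is a bounded `A`-bimodule map with a quasi-basis, then
`f(φ)` has a quasi-basis and there is an isomorphism `ρ : A′ ∩ C → B′ ∩ D` conjugating the
modular automorphism `θ^φ` into the modular automorphism `θ^{f(φ)}`, the modular
automorphisms being characterized by the modular conditions. -/
theorem stmt18 (M : MoritaPair A C B D X Y) (φ : C →L[ℂ] A)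
    (hφ : ∀ (a : A) (c : C), φ (M.ιA a * c) = a * φ c ∧ φ (c * M.ιA a) = φ c * a)
    (m : ℕ) (u v : Fin m → C)
    (hqb : ∀ c : C, c = ∑ i, u i * M.ιA (φ (v i * c)) ∧
      c = ∑ i, M.ιA (φ (c * u i)) * v i)
    (ψ : D →L[ℂ] B)
    (hψ : ∀ (d : D) (x z : X),
      M.innA (M.rB x (ψ d)) z = φ (M.innC (M.rD (M.incl x) d) (M.incl z))) :
    -- `f(φ) = ψ` has a quasi-basis
    (∃ (m' : ℕ) (u' v' : Fin m' → D), ∀ d : D,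
      d = ∑ i, u' i * M.ιB (ψ (v' i * d)) ∧ d = ∑ i, M.ιB (ψ (d * u' i)) * v' i) ∧
    -- and there is an isomorphism `ρ` of `A′ ∩ C` onto `B′ ∩ D` with
    -- `θ^{f(φ)} = ρ ∘ θ^φ ∘ ρ⁻¹`
    ∃ ρ : C → D,
      Set.BijOn ρ {c : C | ∀ a : A, M.ιA a * c = c * M.ιA a}
        {d : D | ∀ b : B, M.ιB b * d = d * M.ιB b} ∧
      (∀ c ∈ {c : C | ∀ a : A, M.ιA a * c = c * M.ιA a},
        ∀ c' ∈ {c : C | ∀ a : A, M.ιA a * c = c * M.ιA a},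
          ρ (c * c') = ρ c * ρ c' ∧ ρ (c + c') = ρ c + ρ c') ∧
      (∀ c ∈ {c : C | ∀ a : A, M.ιA a * c = c * M.ιA a}, ρ (star c) = star (ρ c)) ∧
      ∀ (θφ : C → C) (θψ : D → D),
        ((∀ c ∈ {c : C | ∀ a : A, M.ιA a * c = c * M.ιA a},
            θφ c ∈ {c : C | ∀ a : A, M.ιA a * c = c * M.ιA a}) ∧
          ∀ c ∈ {c : C | ∀ a : A, M.ιA a * c = c * M.ιA a},
            ∀ y : C, φ (c * y) = φ (y * θφ c)) →
        ((∀ d ∈ {d : D | ∀ b : B, M.ιB b * d = d * M.ιB b},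
            θψ d ∈ {d : D | ∀ b : B, M.ιB b * d = d * M.ιB b}) ∧
          ∀ d ∈ {d : D | ∀ b : B, M.ιB b * d = d * M.ιB b},
            ∀ y : D, ψ (d * y) = ψ (y * θψ d)) →
        ∀ c ∈ {c : C | ∀ a : A, M.ιA a * c = c * M.ιA a}, θψ (ρ c) = ρ (θφ c) := by
  obtain ⟨n, x, z, hB⟩ := M.exists_sum_innB_eq_one
  obtain ⟨nA, p, q, hA⟩ := M.exists_sum_innA_eq_one
  have hqbψ := M.isQuasiBasis_induced (x := x) (z := z) (p := p) (q := q) hB hA hφ hψ hqb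
  refine ⟨hqbψ.exists_fin, M.rho x z, ⟨fun c hc => M.rho_mem_commutant hB hc,
      fun c hc c' hc' => M.rho_injOn hB hA hc hc',
      fun d hd => ⟨M.rhoInv p q d, M.rhoInv_mem_commutant hA hd, M.rho_rhoInv hB hA hd⟩⟩,
    fun c hc c' hc' => ⟨M.rho_mul hB hc hc', M.rho_add c c'⟩,
    fun c hc => M.rho_star hB hc, ?_⟩
  intro θφ θψ hθφ hθψ c hc
  refine hqbψ.eq_of_map_mul_eq fun y => ?_
  rw [← hθψ.2 _ (M.rho_mem_commutant hB hc),
    M.map_rho_mul hB hA hψ hc (hθφ.1 c hc) (hθφ.2 c hc)]
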